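/- arXiv:2404.00601 — 8 statements merged into one kernel-verified Lean document; each statement's English description precedes it below -/
import Mathlib

section
/- For N ≥ 1 and real x with 0 ≤ x < 1, the sum over k from 0 to N-1 of C(N-1,k) x^k (1-x)^{N-1-k} · N/(N-k) equals (1 - x^N)/(1-x). -/
/-!
Since `N / (N - k) * C(N-1, k) = C(N, k)`, multiplying the sum by `1 - x` turns it into the
binomial expansion of `(x + (1 - x))^N = 1` with its top term `x^N` removed.
-/

open Finset

theorem Nat.cast_choose_pred_mul_div {K : Type*} [Field K] [CharZero K] {N k : ℕ} (hk : k < N) :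
    ((N - 1).choose k : K) * (N / ((N : K) - k)) = N.choose k := by
  obtain ⟨n, rfl⟩ : ∃ n, N = n + 1 := ⟨N - 1, by omega⟩
  have hsub : ((n + 1 : ℕ) : K) - k ≠ 0 := by
    rw [← Nat.cast_sub hk.le]
    exact_mod_cast (Nat.sub_pos_of_lt hk).ne'
  rw [Nat.add_sub_cancel, mul_div_assoc', div_eq_iff hsub, ← Nat.cast_sub hk.le]
  exact_mod_cast Nat.choose_mul_succ_eq n k

theorem sum_range_choose_mul_pow_mul_pow {R : Type*} [CommRing R] (x y : R) (N : ℕ) :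
    ∑ k ∈ range N, (N.choose k : R) * x ^ k * y ^ (N - k) = (x + y) ^ N - x ^ N := by
  rw [add_pow, sum_range_succ]
  simp only [Nat.choose_self, Nat.cast_one, Nat.sub_self, pow_zero, mul_one]
  rw [add_sub_cancel_right]
  exact sum_congr rfl fun k _ => by ring

theorem one_sub_mul_sum_choose_mul_div {K : Type*} [Field K] [CharZero K] (N : ℕ) (x : K) :
    (1 - x) * ∑ k ∈ range N,
      ((N - 1).choose k : K) * x ^ k * (1 - x) ^ (N - 1 - k) * (N / ((N : K) - k)) =
    1 - x ^ N := by
  have hterm : ∀ k ∈ range N,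
      (1 - x) * (((N - 1).choose k : K) * x ^ k * (1 - x) ^ (N - 1 - k) * (N / ((N : K) - k))) =
      (N.choose k : K) * x ^ k * (1 - x) ^ (N - k) := by
    intro k hk
    have hk : k < N := mem_range.mp hk
    rw [← Nat.cast_choose_pred_mul_div hk, show N - k = N - 1 - k + 1 by omega, pow_succ]
    ring
  rw [mul_sum, sum_congr rfl hterm, sum_range_choose_mul_pow_mul_pow, add_sub_cancel, one_pow]

theorem stmt_3_general (N : ℕ) (x : ℝ) (hx1 : x < 1) :
    ∑ k ∈ Finset.range N,
      ((N - 1).choose k : ℝ) * x ^ k * (1 - x) ^ (N - 1 - k) * (N / ((N : ℝ) - k)) =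
    (1 - x ^ N) / (1 - x) := by
  rw [eq_div_iff (sub_ne_zero.mpr hx1.ne'), mul_comm]
  exact one_sub_mul_sum_choose_mul_div N x

theorem stmt_3 (N : ℕ) (hN : 1 ≤ N) (x : ℝ) (hx0 : 0 ≤ x) (hx1 : x < 1) :
    ∑ k ∈ Finset.range N,
      ((N - 1).choose k : ℝ) * x ^ k * (1 - x) ^ (N - 1 - k) * (N / ((N : ℝ) - k)) =
    (1 - x ^ N) / (1 - x) :=
  stmt_3_general N x hx1
end

section
/- In the tax-reward model, the payoff difference P_C − P_D equals −(b_m y / R_m)·α + δ·(1 − (1−x)^N)/x for 0 < x ≤ 1. -/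
lemma binom_sum (M : ℕ) (x : ℝ) :
    ∑ k ∈ Finset.range (M + 1), (M.choose k : ℝ) * x ^ k * (1 - x) ^ (M - k) = 1 := by
  have h := add_pow x (1 - x) M
  simp only [add_sub_cancel, one_pow] at h
  calc ∑ k ∈ Finset.range (M + 1), (M.choose k : ℝ) * x ^ k * (1 - x) ^ (M - k)
      = ∑ k ∈ Finset.range (M + 1), x ^ k * (1 - x) ^ (M - k) * (M.choose k : ℝ) :=
        Finset.sum_congr rfl fun k _ => by ring
    _ = 1 := h.symm

lemma binom_sum2 (M : ℕ) (x : ℝ) (hx : x ≠ 0) :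
    ∑ k ∈ Finset.range (M + 1),
      (M.choose k : ℝ) * x ^ k * (1 - x) ^ (M - k) * ((M + 1) / (k + 1)) =
    (1 - (1 - x) ^ (M + 1)) / x := by
  rw [eq_div_iff hx, Finset.sum_mul]
  have key : ∀ k ∈ Finset.range (M + 1),
      (M.choose k : ℝ) * x ^ k * (1 - x) ^ (M - k) * ((M + 1) / (k + 1)) * x =
      ((M + 1).choose (k + 1) : ℝ) * x ^ (k + 1) * (1 - x) ^ (M + 1 - (k + 1)) := by
    intro k hk
    have hk1 : ((k : ℝ) + 1) ≠ 0 := by positivity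
    have hc : (((M + 1).choose (k + 1) : ℕ) : ℝ) * ((k : ℝ) + 1) = ((M : ℝ) + 1) * (M.choose k : ℝ) := by
      exact_mod_cast congrArg (fun n : ℕ => (n : ℝ)) (Nat.add_one_mul_choose_eq M k).symm
    have hcc : (M.choose k : ℝ) * (((M : ℝ) + 1) / ((k : ℝ) + 1)) = ((M + 1).choose (k + 1) : ℝ) := by
      field_simp
      linarith [hc]
    rw [Nat.succ_sub_succ, ← hcc]
    ring
  rw [Finset.sum_congr rfl key]
  have h2 := binom_sum (M + 1) x
  rw [Finset.sum_range_succ'] at h2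
  simp only [Nat.choose_zero_right, Nat.cast_one, pow_zero, Nat.sub_zero, one_mul, mul_one] at h2
  push_cast at h2 ⊢
  linarith [h2]

theorem stmt_4 (N : ℕ) (hN : 1 ≤ N) (bm y Rm α δ : ℝ) (hRm : Rm ≠ 0)
    (x : ℝ) (hx0 : 0 < x) (hx1 : x ≤ 1) :
    (∑ k ∈ Finset.range N, ((N - 1).choose k : ℝ) * x ^ k * (1 - x) ^ (N - 1 - k) *
        (bm * y / Rm - δ + N * δ / (k + 1))) -
    (∑ k ∈ Finset.range N, ((N - 1).choose k : ℝ) * x ^ k * (1 - x) ^ (N - 1 - k) *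
        (bm * y / Rm * (1 + α) - δ)) =
    -(bm * y / Rm) * α + δ * (1 - (1 - x) ^ N) / x := by
  obtain ⟨M, rfl⟩ : ∃ M, N = M + 1 := ⟨N - 1, (Nat.succ_pred_eq_of_pos hN).symm⟩
  simp only [Nat.add_sub_cancel]
  have h1 := binom_sum M x
  have h2 := binom_sum2 M x hx0.ne'
  rw [← Finset.sum_sub_distrib]
  push_cast
  have step : ∀ k ∈ Finset.range (M + 1),
      ((M.choose k : ℝ) * x ^ k * (1 - x) ^ (M - k) *
          (bm * y / Rm - δ + ((M : ℝ) + 1) * δ / (k + 1)) -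
       (M.choose k : ℝ) * x ^ k * (1 - x) ^ (M - k) *
          (bm * y / Rm * (1 + α) - δ)) =
      δ * ((M.choose k : ℝ) * x ^ k * (1 - x) ^ (M - k) * (((M : ℝ) + 1) / (k + 1)))
        - (bm * y / Rm * α) * ((M.choose k : ℝ) * x ^ k * (1 - x) ^ (M - k)) := by
    intro k hk
    have hk1 : ((k : ℝ) + 1) ≠ 0 := by positivity
    field_simp
    ring
  rw [Finset.sum_congr rfl step, Finset.sum_sub_distrib, ← Finset.mul_sum, ← Finset.mul_sum,
    h1, h2]
  ring
end

section
/- In the tax-punishment model, the payoff difference P_C − P_D equals −(b_m y / R_m)·α + δ·(1 − x^N)/(1−x) for 0 ≤ x < 1. -/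
theorem stmt_5 (N : ℕ) (hN : 1 ≤ N) (bm y Rm α δ : ℝ) (hRm : Rm ≠ 0)
    (x : ℝ) (hx0 : 0 ≤ x) (hx1 : x < 1) :
    (∑ k ∈ Finset.range N, ((N - 1).choose k : ℝ) * x ^ k * (1 - x) ^ (N - 1 - k) *
        (bm * y / Rm - δ)) -
    (∑ k ∈ Finset.range N, ((N - 1).choose k : ℝ) * x ^ k * (1 - x) ^ (N - 1 - k) *
        (bm * y / Rm * (1 + α) - δ - N * δ / ((N : ℝ) - k))) =
    -(bm * y / Rm) * α + δ * (1 - x ^ N) / (1 - x) := by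
  have hx : (1 : ℝ) - x ≠ 0 := by linarith
  rw [← Finset.sum_sub_distrib]
  have key : ∀ k ∈ Finset.range N,
      ((N - 1).choose k : ℝ) * x ^ k * (1 - x) ^ (N - 1 - k) * (bm * y / Rm - δ) -
      ((N - 1).choose k : ℝ) * x ^ k * (1 - x) ^ (N - 1 - k) *
        (bm * y / Rm * (1 + α) - δ - N * δ / ((N : ℝ) - k)) =
      (-(bm * y / Rm) * α) * (((N - 1).choose k : ℝ) * x ^ k * (1 - x) ^ (N - 1 - k))
      + (δ / (1 - x)) * ((N.choose k : ℝ) * x ^ k * (1 - x) ^ (N - k)) := by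
    intro k hk
    have hkN : k < N := Finset.mem_range.mp hk
    have hkR : (k : ℝ) < N := by exact_mod_cast hkN
    have h1 : ((N : ℝ) - k) ≠ 0 := by linarith
    have hpow : (1 - x) ^ (N - k) = (1 - x) * (1 - x) ^ (N - 1 - k) := by
      rw [← pow_succ']
      congr 1
      omega
    have hch : ((N - 1).choose k : ℝ) * (N : ℝ) = (N.choose k : ℝ) * ((N : ℝ) - (k : ℝ)) := by
      have h := Nat.choose_mul_succ_eq (N - 1) k
      have hN1 : N - 1 + 1 = N := by omega
      rw [hN1] at h
      have h' : (((N - 1).choose k * N : ℕ) : ℝ) = ((N.choose k * (N - k) : ℕ) : ℝ) := by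
        exact_mod_cast congrArg Nat.cast h
      rwa [Nat.cast_mul, Nat.cast_mul, Nat.cast_sub hkN.le] at h'
    have hNck : (N.choose k : ℝ) = ((N - 1).choose k : ℝ) * N / ((N : ℝ) - k) := by
      field_simp
      linarith [hch]
    rw [hpow, hNck]
    field_simp
    ring
  rw [Finset.sum_congr rfl key, Finset.sum_add_distrib, ← Finset.mul_sum, ← Finset.mul_sum]
  have sum1 : ∑ k ∈ Finset.range N, ((N - 1).choose k : ℝ) * x ^ k * (1 - x) ^ (N - 1 - k)
      = 1 := by
    have h := add_pow x (1 - x) (N - 1)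
    rw [show x + (1 - x) = 1 by ring, one_pow, show N - 1 + 1 = N by omega] at h
    conv_rhs => rw [h]
    apply Finset.sum_congr rfl
    intro k _
    ring
  have sum2 : ∑ k ∈ Finset.range N, (N.choose k : ℝ) * x ^ k * (1 - x) ^ (N - k)
      = 1 - x ^ N := by
    have h := add_pow x (1 - x) N
    rw [show x + (1 - x) = 1 by ring, one_pow, Finset.sum_range_succ] at h
    simp only [Nat.sub_self, pow_zero, Nat.choose_self, Nat.cast_one, mul_one, one_mul] at h
    have : ∑ k ∈ Finset.range N, (N.choose k : ℝ) * x ^ k * (1 - x) ^ (N - k)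
        = ∑ k ∈ Finset.range N, x ^ k * (1 - x) ^ (N - k) * (N.choose k : ℝ) := by
      apply Finset.sum_congr rfl; intro k _; ring
    rw [this]
    linarith
  rw [sum1, sum2]
  field_simp
end

section
/- If δ − α b_m + α N b_m²/(r R_m) < 0 and Nδ − α b_m + α N b_m²/(r R_m) + α² N b_m²/(r R_m) > 0, then there exists a unique interior fixed point (x*, y*) with 0 < x* < 1 and 0 < y* < R_m of the tax-reward system. -/
/-!
Substituting the y-nullcline into the x-equation leaves one equation in `x`. Extending
`δ (1 - (1 - x)^N) / x` continuously to `x = 0` as the geometric sum `δ ∑_{k<N} (1 - x)^k`, the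
difference of the two sides is continuous and strictly decreasing on `[0, 1]` (the sum is
antitone, the y-nullcline strictly increasing), and the two hypotheses say exactly that it is
positive at `x = 0` and negative at `x = 1`. Hence it has exactly one zero in `(0, 1)`, and the
x-equation forces the corresponding `y` to be positive.
-/

open Set
open Finset (range sum_le_sum sum_const card_range)

theorem one_sub_one_sub_pow_div {K : Type*} [Field K] {x : K} (hx : x ≠ 0) (N : ℕ) :
    (1 - (1 - x) ^ N) / x = ∑ k ∈ range N, (1 - x) ^ k := by
  rw [div_eq_iff hx]
  linear_combination geom_sum_mul (1 - x) N

theorem antitoneOn_geom_sum_one_sub (N : ℕ) :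
    AntitoneOn (fun x : ℝ ↦ ∑ k ∈ range N, (1 - x) ^ k) (Iic 1) := fun _ _ x₂ hx₂ h ↦
  sum_le_sum fun k _ ↦ pow_le_pow_left₀ (sub_nonneg.2 hx₂) (by linarith) k

namespace TaxReward

variable (N : ℕ) (r δ bm α Rm : ℝ)

noncomputable def yNullcline (x : ℝ) : ℝ := Rm - N * bm / r * (1 + (1 - x) * α)

/-- The x-equation along the y-nullcline, with `δ (1 - (1 - x)^N) / x` replaced by its
continuous extension to `x = 0`. -/
noncomputable def gap (x : ℝ) : ℝ :=
  δ * ∑ k ∈ range N, (1 - x) ^ k - yNullcline N r bm α Rm x / Rm * bm * α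

variable {N r δ bm α Rm}

theorem yNullcline_strictMono (hN : 0 < N) (hr : 0 < r) (hbm : 0 < bm) (hα : 0 < α) :
    StrictMono (yNullcline N r bm α Rm) := by
  intro x₁ x₂ h
  have : 0 < N * bm / r * α := by positivity
  simp only [yNullcline]
  nlinarith

theorem yNullcline_lt (hN : 0 < N) (hr : 0 < r) (hbm : 0 < bm) (hα : 0 < α) {x : ℝ}
    (hx : x < 1) : yNullcline N r bm α Rm x < Rm := by
  have : 0 < N * bm / r * (1 + (1 - x) * α) := by
    have : 0 < 1 - x := by linarith
    positivity
  simp only [yNullcline]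
  linarith

theorem gap_strictAntiOn (hN : 0 < N) (hr : 0 < r) (hδ : 0 ≤ δ) (hbm : 0 < bm) (hα : 0 < α)
    (hRm : 0 < Rm) : StrictAntiOn (gap N r δ bm α Rm) (Iic 1) := by
  intro x₁ hx₁ x₂ hx₂ h
  have hsum := antitoneOn_geom_sum_one_sub N hx₁ hx₂ h.le
  have hy := yNullcline_strictMono (Rm := Rm) hN hr hbm hα h
  have hy' : yNullcline N r bm α Rm x₁ / Rm * bm * α <
      yNullcline N r bm α Rm x₂ / Rm * bm * α := by
    gcongr
  simp only [gap]
  linarith [mul_le_mul_of_nonneg_left hsum hδ]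

theorem continuous_gap : Continuous (gap N r δ bm α Rm) := by
  unfold gap yNullcline
  fun_prop

theorem gap_zero (hr : r ≠ 0) (hRm : Rm ≠ 0) :
    gap N r δ bm α Rm 0 =
      N * δ - α * bm + α * N * bm ^ 2 / (r * Rm) + α ^ 2 * N * bm ^ 2 / (r * Rm) := by
  simp only [gap, yNullcline, sub_zero, one_pow, sum_const, card_range, nsmul_eq_mul, mul_one]
  field_simp
  ring

theorem gap_one (hN : N ≠ 0) (hr : r ≠ 0) (hRm : Rm ≠ 0) :
    gap N r δ bm α Rm 1 = δ - α * bm + α * N * bm ^ 2 / (r * Rm) := by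
  have hsum : ∑ k ∈ range N, ((1 : ℝ) - 1) ^ k = 1 := by
    rw [sub_self, geom_sum_eq zero_ne_one, zero_pow hN]
    norm_num
  simp only [gap, yNullcline, hsum]
  field_simp
  ring

theorem fixedPoint_iff {x y : ℝ} (hx : x ≠ 0) :
    (δ * (1 - (1 - x) ^ N) / x = y / Rm * bm * α ∧ y = yNullcline N r bm α Rm x) ↔
      (gap N r δ bm α Rm x = 0 ∧ y = yNullcline N r bm α Rm x) := by
  rw [mul_div_assoc, one_sub_one_sub_pow_div hx, gap, sub_eq_zero]
  exact and_congr_left fun hy ↦ by rw [hy]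

theorem pos_of_fixedPoint (hN : N ≠ 0) (hδ : 0 < δ) (hbm : 0 < bm) (hα : 0 < α) (hRm : 0 < Rm)
    {x y : ℝ} (hx : x ∈ Ioo 0 1) (h : δ * (1 - (1 - x) ^ N) / x = y / Rm * bm * α) :
    0 < y := by
  have hpow : (1 - x) ^ N < 1 := pow_lt_one₀ (by linarith [hx.2]) (by linarith [hx.1]) hN
  have hlhs : 0 < δ * (1 - (1 - x) ^ N) / x := div_pos (mul_pos hδ (by linarith)) hx.1
  rw [h, mul_assoc] at hlhs
  exact (div_pos_iff_of_pos_right hRm).1 (pos_of_mul_pos_left hlhs (by positivity))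

theorem existsUnique_gap_eq_zero (hN : 0 < N) (hr : 0 < r) (hδ : 0 ≤ δ) (hbm : 0 < bm)
    (hα : 0 < α) (hRm : 0 < Rm) (h0 : 0 < gap N r δ bm α Rm 0) (h1 : gap N r δ bm α Rm 1 < 0) :
    ∃! x, x ∈ Ioo 0 1 ∧ gap N r δ bm α Rm x = 0 := by
  obtain ⟨x, hx, hgap⟩ :=
    intermediate_value_Ioo' zero_le_one continuous_gap.continuousOn ⟨h1, h0⟩
  refine ⟨x, ⟨hx, hgap⟩, fun x' ⟨hx', hgap'⟩ ↦ ?_⟩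
  exact (gap_strictAntiOn hN hr hδ hbm hα hRm).injOn hx'.2.le hx.2.le (hgap'.trans hgap.symm)

end TaxReward

open TaxReward in
theorem stmt_10 (N : ℕ) (hN : 2 ≤ N) (r δ bm α Rm : ℝ)
    (hr : 0 < r) (hδ : 0 < δ) (hbm : 0 < bm) (hα : 0 < α) (hRm : 0 < Rm)
    (h1 : δ - α * bm + α * N * bm ^ 2 / (r * Rm) < 0)
    (h2 : N * δ - α * bm + α * N * bm ^ 2 / (r * Rm) + α ^ 2 * N * bm ^ 2 / (r * Rm) > 0) :
    ∃! p : ℝ × ℝ, (0 < p.1 ∧ p.1 < 1 ∧ 0 < p.2 ∧ p.2 < Rm) ∧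
      δ * (1 - (1 - p.1) ^ N) / p.1 = p.2 / Rm * bm * α ∧
      p.2 = Rm - N * bm / r * (1 + (1 - p.1) * α) := by
  have hN0 : 0 < N := by omega
  obtain ⟨x, ⟨hx, hgap⟩, huniq⟩ := existsUnique_gap_eq_zero hN0 hr hδ.le hbm hα hRm
    (gap_zero hr.ne' hRm.ne' ▸ h2) (gap_one hN0.ne' hr.ne' hRm.ne' ▸ h1)
  refine ⟨(x, yNullcline N r bm α Rm x), ?_, ?_⟩
  · have hfix := (fixedPoint_iff hx.1.ne').2 ⟨hgap, rfl⟩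
    exact ⟨⟨hx.1, hx.2, pos_of_fixedPoint hN0.ne' hδ hbm hα hRm hx hfix.1,
      yNullcline_lt hN0 hr hbm hα hx.2⟩, hfix⟩
  · rintro ⟨x', y'⟩ ⟨⟨hx'₀, hx'₁, -⟩, hfix⟩
    obtain ⟨hgap', hy'⟩ := (fixedPoint_iff hx'₀.ne').1 hfix
    obtain rfl := huniq x' ⟨⟨hx'₀, hx'₁⟩, hgap'⟩
    exact Prod.ext rfl hy'
end

section
/- An interior fixed point (x*, y*) of the tax-reward system satisfies y* = R_m − (N b_m / r)(1 + (1−x*)α) and δ(1−(1−x*)^N)/x* = (y*/R_m) b_m α; substituting, x* is a root of F(x) := δ(1−(1−x)^N)/x − b_m α [1 − (N b_m)/(r R_m) (1+(1−x)α)] = 0, and F is strictly decreasing on (0,1]. -/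
lemma geom_rewrite (N : ℕ) (z : ℝ) (hz : z ≠ 0) :
    (1 - (1 - z) ^ N) / z = ∑ i ∈ Finset.range N, (1 - z) ^ i := by
  have h := geom_sum_mul (1 - z) N
  have : 1 - (1 - z) ^ N = z * ∑ i ∈ Finset.range N, (1 - z) ^ i := by
    linear_combination h
  rw [this, mul_div_cancel_left₀ _ hz]

theorem stmt_11 (N : ℕ) (hN : 2 ≤ N) (r δ bm α Rm : ℝ)
    (hr : 0 < r) (hδ : 0 < δ) (hbm : 0 < bm) (hα : 0 < α) (hRm : 0 < Rm)
    (x y : ℝ) (hx0 : 0 < x) (hx1 : x < 1) (hy : 0 < y)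
    (hfx : δ * (1 - (1 - x) ^ N) / x = y / Rm * bm * α)
    (hfy : r * y * (1 - y / Rm) = N * (y / Rm) * bm * (1 + (1 - x) * α)) :
    y = Rm - N * bm / r * (1 + (1 - x) * α) ∧
    (fun z : ℝ => δ * (1 - (1 - z) ^ N) / z -
        bm * α * (1 - N * bm / (r * Rm) * (1 + (1 - z) * α))) x = 0 ∧
    StrictAntiOn (fun z : ℝ => δ * (1 - (1 - z) ^ N) / z -
        bm * α * (1 - N * bm / (r * Rm) * (1 + (1 - z) * α))) (Set.Ioc (0 : ℝ) 1) := by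
  have hRm' : Rm ≠ 0 := ne_of_gt hRm
  have hr' : r ≠ 0 := ne_of_gt hr
  have hy' : y ≠ 0 := ne_of_gt hy
  have hkey : y * r = Rm * r - N * bm * (1 + (1 - x) * α) := by
    field_simp at hfy
    have h2 : y * (r * (Rm - y)) = y * ((N : ℝ) * bm * (1 + (1 - x) * α)) := by
      nlinarith [hfy]
    have := mul_left_cancel₀ hy' h2
    linarith
  have h1 : y = Rm - N * bm / r * (1 + (1 - x) * α) := by
    field_simp
    linarith
  refine ⟨h1, ?_, ?_⟩
  · simp only
    rw [hfx, h1]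
    field_simp
    ring
  · intro a ha b hb hab
    obtain ⟨ha0, ha1⟩ := ha
    obtain ⟨hb0, hb1⟩ := hb
    simp only
    simp only [mul_div_assoc]
    rw [geom_rewrite N a (ne_of_gt ha0),
      geom_rewrite N b (ne_of_gt hb0)]
    have hS : ∑ i ∈ Finset.range N, (1 - b) ^ i < ∑ i ∈ Finset.range N, (1 - a) ^ i := by
      apply Finset.sum_lt_sum
      · intro i _
        exact pow_le_pow_left₀ (by linarith) (by linarith) i
      · refine ⟨1, Finset.mem_range.mpr (by omega), ?_⟩
        simpa using (by linarith : 1 - b < 1 - a)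
    have hc : 0 < bm * α * ((N : ℝ) * (bm / (r * Rm))) * α := by
      have hN0 : (0 : ℝ) < N := by positivity
      positivity
    have h2 := mul_lt_mul_of_pos_left hab hc
    have h3 := mul_lt_mul_of_pos_left hS hδ
    nlinarith [h2, h3]
end

section
/- For the tax-reward system with r > N b_m (1+α)/R_m and Nδ − α b_m + α N b_m²/(r R_m) + α² N b_m²/(r R_m) < 0, the fixed point (0, R_m − N b_m(1+α)/r) is linearly stable: both Jacobian eigenvalues, namely Nδ − (y₀/R_m) b_m α with y₀ = R_m − N b_m(1+α)/r, and −r y₀/R_m, are negative. -/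
theorem stmt_14 (N : ℕ) (hN : 1 ≤ N) (r δ bm α Rm : ℝ)
    (hr : 0 < r) (hδ : 0 < δ) (hbm : 0 < bm) (hα : 0 < α) (hRm : 0 < Rm)
    (hgrow : r > N * bm * (1 + α) / Rm)
    (hcond : N * δ - α * bm + α * N * bm ^ 2 / (r * Rm) + α ^ 2 * N * bm ^ 2 / (r * Rm) < 0) :
    N * δ - (Rm - N * bm * (1 + α) / r) / Rm * bm * α < 0 ∧
    -(r * (Rm - N * bm * (1 + α) / r) / Rm) < 0 := by
  have hy : 0 < Rm - N * bm * (1 + α) / r := by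
    rw [sub_pos, div_lt_iff₀ hr]
    calc N * bm * (1 + α) < r * Rm := by
          have := (div_lt_iff₀ hRm).mp hgrow; linarith
      _ = Rm * r := by ring
  constructor
  · have key : N * δ - (Rm - N * bm * (1 + α) / r) / Rm * bm * α
        = N * δ - α * bm + α * N * bm ^ 2 / (r * Rm) + α ^ 2 * N * bm ^ 2 / (r * Rm) := by
      field_simp
      ring
    rw [key]; exact hcond
  · have : 0 < r * (Rm - N * bm * (1 + α) / r) / Rm :=
      div_pos (mul_pos hr hy) hRm
    linarith
end

section
/- For the tax-reward system with r > N b_m / R_m and δ − α b_m + α N b_m²/(r R_m) > 0, the fixed point (1, R_m − N b_m/r) is linearly stable: the Jacobian eigenvalues −[δ − (y₁/R_m) b_m α] with y₁ = R_m − N b_m/r, and −r y₁/R_m, are both negative. -/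
theorem stmt_15 (N : ℕ) (hN : 1 ≤ N) (r δ bm α Rm : ℝ)
    (hr : 0 < r) (hδ : 0 < δ) (hbm : 0 < bm) (hα : 0 < α) (hRm : 0 < Rm)
    (hgrow : r > N * bm / Rm)
    (hcond : δ - α * bm + α * N * bm ^ 2 / (r * Rm) > 0) :
    -(δ - (Rm - N * bm / r) / Rm * bm * α) < 0 ∧
    -(r * (Rm - N * bm / r) / Rm) < 0 := by
  have hy : (0:ℝ) < Rm - N * bm / r := by
    rw [sub_pos, div_lt_iff₀ hr]
    rw [gt_iff_lt, div_lt_iff₀ hRm] at hgrow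
    linarith [hgrow]
  constructor
  · have key : δ - (Rm - N * bm / r) / Rm * bm * α
        = δ - α * bm + α * N * bm ^ 2 / (r * Rm) := by
      field_simp
      ring
    rw [key]; linarith
  · have : 0 < r * (Rm - N * bm / r) / Rm := by positivity
    linarith
end

section
/- For the tax-punishment system, the fixed point (0, R_m − N b_m(1+α)/r) is linearly stable whenever r > N b_m(1+α)/R_m and δ − α b_m + α N b_m²/(r R_m) + α² N b_m²/(r R_m) < 0: the Jacobian eigenvalues are δ − (y₀/R_m) b_m α < 0 with y₀ = R_m − N b_m(1+α)/r, and −r y₀/R_m < 0. -/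
theorem stmt_17 (N : ℕ) (hN : 1 ≤ N) (r δ bm α Rm : ℝ)
    (hr : 0 < r) (hδ : 0 < δ) (hbm : 0 < bm) (hα : 0 < α) (hRm : 0 < Rm)
    (hgrow : r > N * bm * (1 + α) / Rm)
    (hcond : δ - α * bm + α * N * bm ^ 2 / (r * Rm) + α ^ 2 * N * bm ^ 2 / (r * Rm) < 0) :
    δ - (Rm - N * bm * (1 + α) / r) / Rm * bm * α < 0 ∧
    -(r * (Rm - N * bm * (1 + α) / r) / Rm) < 0 := by
  have hy : (N : ℝ) * bm * (1 + α) < r * Rm := by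
    have := (div_lt_iff₀ hRm).mp hgrow
    linarith
  have h1 : δ - (Rm - N * bm * (1 + α) / r) / Rm * bm * α
      = δ - α * bm + α * N * bm ^ 2 / (r * Rm) + α ^ 2 * N * bm ^ 2 / (r * Rm) := by
    field_simp
    ring
  constructor
  · rw [h1]; exact hcond
  · have hy0 : 0 < Rm - N * bm * (1 + α) / r := by
      rw [sub_pos, div_lt_iff₀ hr]
      linarith [hy]
    have : 0 < r * (Rm - N * bm * (1 + α) / r) / Rm :=
      div_pos (mul_pos hr hy0) hRm
    linarith
end
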